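/- arXiv:quant-ph/0303167 — 2 statements merged into one kernel-verified Lean document; each statement's English description precedes it below -/
import Mathlib

section
/- Let {k_μ}_{μ=1}^m be a rank-1 POVM on ℂ^d, let ζ ∈ ℂ^d be any unit vector, set e = m + 1, and fix an orthonormal basis a₀, a₁, …, a_m of ℂ^e. Then there exists a Naimark extension {w_ν}_{ν=1}^{de} of the POVM with basic ancilla state a₀ such that for ν = 1, …, m one has w_ν = k_ν ⊗ a₀ + ζ ⊗ ξ_ν, where each ξ_ν ∈ ℂ^e is orthogonal to a₀, and for ν > m the vector w_ν is orthogonal to ψ ⊗ a₀ for every ψ ∈ ℂ^d. -/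
open scoped InnerProductSpace

/-- The rank-one operator `|k⟩⟨k| : x ↦ ⟨k, x⟩ • k` on `ℂ^d`. -/
noncomputable def rankOne {d : ℕ} (k : EuclideanSpace ℂ (Fin d)) :
    EuclideanSpace ℂ (Fin d) →ₗ[ℂ] EuclideanSpace ℂ (Fin d) where
  toFun x := ⟪k, x⟫_ℂ • k
  map_add' x y := by simp [inner_add_right, add_smul]
  map_smul' c x := by simp [inner_smul_right, smul_smul]

/-- The product vector `ψ ⊗ a` in `ℂ^d ⊗ ℂ^e`, modeled as `ℂ^{d·e}`. -/
def tp {d e : ℕ} (ψ : EuclideanSpace ℂ (Fin d)) (a : EuclideanSpace ℂ (Fin e)) :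
    EuclideanSpace ℂ (Fin d × Fin e) :=
  WithLp.toLp 2 (fun p : Fin d × Fin e => ψ p.1 * a p.2)

/-- `w` is a Naimark extension of the rank-1 POVM `{k_μ}_{μ=1}^m` on `ℂ^d` with ancilla
dimension `e` and basic ancilla state `a₀`. -/
def IsNaimark {d e m : ℕ} (k : Fin m → EuclideanSpace ℂ (Fin d))
    (a₀ : EuclideanSpace ℂ (Fin e))
    (w : Fin (d * e) → EuclideanSpace ℂ (Fin d × Fin e)) : Prop :=
  ‖a₀‖ = 1 ∧ Orthonormal ℂ w ∧
    (∀ (ν : Fin (d * e)) (h : (ν : ℕ) < m) (ψ : EuclideanSpace ℂ (Fin d)),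
      ‖⟪tp ψ a₀, w ν⟫_ℂ‖ ^ 2 = ‖⟪ψ, k ⟨(ν : ℕ), h⟩⟫_ℂ‖ ^ 2) ∧
    (∀ (ν : Fin (d * e)), m ≤ (ν : ℕ) →
      ∀ ψ : EuclideanSpace ℂ (Fin d), ⟪tp ψ a₀, w ν⟫_ℂ = 0)

lemma tp_inner {d e : ℕ} (ψ φ : EuclideanSpace ℂ (Fin d)) (a b : EuclideanSpace ℂ (Fin e)) :
    ⟪tp ψ a, tp φ b⟫_ℂ = ⟪ψ, φ⟫_ℂ * ⟪a, b⟫_ℂ := by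
  simp only [PiLp.inner_apply, RCLike.inner_apply, tp, PiLp.toLp_apply, map_mul]
  rw [Finset.sum_mul_sum, Fintype.sum_prod_type]
  exact Finset.sum_congr rfl fun i _ => Finset.sum_congr rfl fun j _ => by ring

lemma tp_add_left {d e : ℕ} (x y : EuclideanSpace ℂ (Fin d)) (a : EuclideanSpace ℂ (Fin e)) :
    tp (x + y) a = tp x a + tp y a := by
  ext p; simp [tp]; ring

lemma tp_smul_left {d e : ℕ} (c : ℂ) (x : EuclideanSpace ℂ (Fin d))
    (a : EuclideanSpace ℂ (Fin e)) : tp (c • x) a = c • tp x a := by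
  ext p; simp [tp]; ring

lemma tp_add_right {d e : ℕ} (x : EuclideanSpace ℂ (Fin d)) (a b : EuclideanSpace ℂ (Fin e)) :
    tp x (a + b) = tp x a + tp x b := by
  ext p; simp [tp]; ring

lemma tp_smul_right {d e : ℕ} (c : ℂ) (x : EuclideanSpace ℂ (Fin d))
    (a : EuclideanSpace ℂ (Fin e)) : tp x (c • a) = c • tp x a := by
  ext p; simp [tp]; ring

lemma tp_zero_right {d e : ℕ} (x : EuclideanSpace ℂ (Fin d)) :
    tp x (0 : EuclideanSpace ℂ (Fin e)) = 0 := by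
  ext p; simp [tp]

/-- `tp · a` as a linear map. -/
def tpL {d e : ℕ} (a : EuclideanSpace ℂ (Fin e)) :
    EuclideanSpace ℂ (Fin d) →ₗ[ℂ] EuclideanSpace ℂ (Fin d × Fin e) where
  toFun ψ := tp ψ a
  map_add' x y := tp_add_left x y a
  map_smul' c x := tp_smul_left c x a

/-- `tp x ·` as a linear map. -/
def tpR {d e : ℕ} (x : EuclideanSpace ℂ (Fin d)) :
    EuclideanSpace ℂ (Fin e) →ₗ[ℂ] EuclideanSpace ℂ (Fin d × Fin e) where
  toFun a := tp x a
  map_add' a b := tp_add_right x a b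
  map_smul' c a := tp_smul_right c x a

/-- Given a rank-1 POVM `{k_μ}_{μ=1}^m` on `ℂ^d`, a unit vector
`ζ ∈ ℂ^d`, ancilla dimension `e = m + 1` and an orthonormal basis `a₀, …, a_m` of
`ℂ^{m+1}`, there is a Naimark extension `{w_ν}` of the POVM with basic ancilla state
`a₀` such that `w_ν = k_ν ⊗ a₀ + ζ ⊗ ξ_ν` (with `ξ_ν ⊥ a₀`) for `ν ≤ m`; the vectors
`w_ν` for `ν > m` are orthogonal to every `ψ ⊗ a₀` (this is part of `IsNaimark`). -/
theorem naimark_extension_with_fixed_direction {d m : ℕ}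
    (k : Fin m → EuclideanSpace ℂ (Fin d))
    (hk : ∑ μ, rankOne (k μ) = LinearMap.id)
    (ζ : EuclideanSpace ℂ (Fin d)) (hζ : ‖ζ‖ = 1)
    (a : Fin (m + 1) → EuclideanSpace ℂ (Fin (m + 1))) (ha : Orthonormal ℂ a) :
    ∃ w : Fin (d * (m + 1)) → EuclideanSpace ℂ (Fin d × Fin (m + 1)),
      IsNaimark k (a 0) w ∧
      ∀ (ν : Fin (d * (m + 1))) (h : (ν : ℕ) < m),
        ∃ ξ : EuclideanSpace ℂ (Fin (m + 1)),
          ⟪a 0, ξ⟫_ℂ = 0 ∧ w ν = tp (k ⟨(ν : ℕ), h⟩) (a 0) + tp ζ ξ := by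
  classical
  have habs : ∀ i j, ⟪a i, a j⟫_ℂ = if i = j then 1 else 0 := orthonormal_iff_ite.mp ha
  -- the resolution of identity, as vectors
  have hkv : ∀ φ : EuclideanSpace ℂ (Fin d), ∑ μ, ⟪k μ, φ⟫_ℂ • k μ = φ := by
    intro φ
    have h := LinearMap.ext_iff.mp hk φ
    simpa [rankOne, LinearMap.sum_apply] using h
  -- the key Gram identity
  have key : ∀ ψ φ : EuclideanSpace ℂ (Fin d),
      ∑ μ, ⟪k μ, φ⟫_ℂ * ⟪ψ, k μ⟫_ℂ = ⟪ψ, φ⟫_ℂ := by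
    intro ψ φ
    conv_rhs => rw [← hkv φ]
    rw [inner_sum]
    exact Finset.sum_congr rfl fun μ _ => by rw [inner_smul_right]
  -- the ancilla correction vectors
  set ξ : Fin m → EuclideanSpace ℂ (Fin (m + 1)) :=
    fun ν => a ν.succ - ∑ μ, ⟪k μ, k ν⟫_ℂ • a μ.succ with hξdef
  have hξ0 : ∀ ν, ⟪a 0, ξ ν⟫_ℂ = 0 := by
    intro ν
    simp only [hξdef, inner_sub_right, inner_sum, inner_smul_right, habs,
      (Fin.succ_ne_zero _).symm, if_false, mul_zero, Finset.sum_const_zero, sub_zero]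
  have hξ0' : ∀ ν, ⟪ξ ν, a 0⟫_ℂ = 0 := by
    intro ν
    rw [← inner_conj_symm, hξ0, map_zero]
  have t2 : ∀ μ ν : Fin m,
      ⟪a μ.succ, ∑ σ, ⟪k σ, k ν⟫_ℂ • a σ.succ⟫_ℂ = ⟪k μ, k ν⟫_ℂ := by
    intro μ ν
    simp [inner_sum, inner_smul_right, habs, Fin.succ_inj, mul_ite]
  have hξξ : ∀ μ ν, ⟪ξ μ, ξ ν⟫_ℂ = (if μ = ν then 1 else 0) - ⟪k μ, k ν⟫_ℂ := by
    intro μ ν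
    have t1 : ⟪a μ.succ, a ν.succ⟫_ℂ = if μ = ν then (1:ℂ) else 0 := by
      rw [habs]; simp [Fin.succ_inj]
    have t3 : ⟪∑ σ, ⟪k σ, k μ⟫_ℂ • a σ.succ, a ν.succ⟫_ℂ = ⟪k μ, k ν⟫_ℂ := by
      rw [← inner_conj_symm, t2 ν μ, inner_conj_symm]
    have t4 : ⟪∑ σ, ⟪k σ, k μ⟫_ℂ • a σ.succ, ∑ σ, ⟪k σ, k ν⟫_ℂ • a σ.succ⟫_ℂ
        = ⟪k μ, k ν⟫_ℂ := by
      rw [sum_inner]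
      calc ∑ x, ⟪⟪k x, k μ⟫_ℂ • a x.succ, ∑ σ, ⟪k σ, k ν⟫_ℂ • a σ.succ⟫_ℂ
          = ∑ x, ⟪k x, k ν⟫_ℂ * ⟪k μ, k x⟫_ℂ := by
            refine Finset.sum_congr rfl fun x _ => ?_
            rw [inner_smul_left, t2 x ν, inner_conj_symm]
            ring
        _ = ⟪k μ, k ν⟫_ℂ := key (k μ) (k ν)
    simp only [hξdef]
    rw [inner_sub_left, inner_sub_right, inner_sub_right, t1, t2 μ ν, t3, t4]
    ring
  -- the first m extension vectors
  set w0 : Fin m → EuclideanSpace ℂ (Fin d × Fin (m + 1)) :=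
    fun ν => tp (k ν) (a 0) + tp ζ (ξ ν) with hw0def
  have ha00 : ⟪a 0, a 0⟫_ℂ = 1 := by rw [habs]; simp
  have hζζ : ⟪ζ, ζ⟫_ℂ = 1 := by
    rw [inner_self_eq_norm_sq_to_K, hζ]; norm_num
  have hinner_w0 : ∀ (ψ : EuclideanSpace ℂ (Fin d)) (ν : Fin m),
      ⟪tp ψ (a 0), w0 ν⟫_ℂ = ⟪ψ, k ν⟫_ℂ := by
    intro ψ ν
    rw [hw0def]
    simp only [inner_add_right, tp_inner, hξ0, ha00, mul_one, mul_zero, add_zero]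
  have hw0w0 : ∀ μ ν, ⟪w0 μ, w0 ν⟫_ℂ = if μ = ν then 1 else 0 := by
    intro μ ν
    rw [hw0def]
    simp only [inner_add_left, inner_add_right, tp_inner, hξ0, hξ0', hξξ, ha00, hζζ,
      mul_zero, zero_mul, mul_one, add_zero, zero_add, one_mul]
    ring
  -- the key expansion of `tp ψ (a 0)` in terms of the `w0`
  have hsum : ∀ ψ : EuclideanSpace ℂ (Fin d),
      ∑ μ, ⟪k μ, ψ⟫_ℂ • w0 μ = tp ψ (a 0) := by
    intro ψ
    have h1 : ∑ μ, ⟪k μ, ψ⟫_ℂ • tp (k μ) (a 0) = tp ψ (a 0) := by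
      calc ∑ μ, ⟪k μ, ψ⟫_ℂ • tp (k μ) (a 0)
          = tpL (a 0) (∑ μ, ⟪k μ, ψ⟫_ℂ • k μ) := by
            rw [map_sum]
            exact Finset.sum_congr rfl fun μ _ => (map_smul (tpL (a 0)) _ _).symm
        _ = tp ψ (a 0) := by rw [hkv]; rfl
    have hξsum : ∑ μ, ⟪k μ, ψ⟫_ℂ • ξ μ = 0 := by
      simp only [hξdef, smul_sub, Finset.sum_sub_distrib, smul_smul, Finset.smul_sum]
      rw [sub_eq_zero, Finset.sum_comm]
      refine Finset.sum_congr rfl fun lam _ => ?_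
      rw [← Finset.sum_smul]
      congr 1
      exact (key (k lam) ψ).symm
    have h2 : ∑ μ, ⟪k μ, ψ⟫_ℂ • tp ζ (ξ μ) = 0 := by
      calc ∑ μ, ⟪k μ, ψ⟫_ℂ • tp ζ (ξ μ)
          = tpR ζ (∑ μ, ⟪k μ, ψ⟫_ℂ • ξ μ) := by
            rw [map_sum]
            exact Finset.sum_congr rfl fun μ _ => (map_smul (tpR ζ) _ _).symm
        _ = 0 := by rw [hξsum, map_zero]
    calc ∑ μ, ⟪k μ, ψ⟫_ℂ • w0 μ
        = ∑ μ, (⟪k μ, ψ⟫_ℂ • tp (k μ) (a 0) + ⟪k μ, ψ⟫_ℂ • tp ζ (ξ μ)) := by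
          refine Finset.sum_congr rfl fun μ _ => ?_
          simp only [hw0def, smul_add]
      _ = tp ψ (a 0) := by rw [Finset.sum_add_distrib, h1, h2, add_zero]
  -- extend to an orthonormal basis
  have hcard : Module.finrank ℂ (EuclideanSpace ℂ (Fin d × Fin (m + 1)))
      = Fintype.card (Fin (d * (m + 1))) := by
    simp [finrank_euclideanSpace]
  set v : Fin (d * (m + 1)) → EuclideanSpace ℂ (Fin d × Fin (m + 1)) :=
    fun ν => if h : (ν : ℕ) < m then w0 ⟨ν, h⟩ else 0 with hvdef
  set s : Set (Fin (d * (m + 1))) := {ν | (ν : ℕ) < m} with hsdef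
  have hres : Orthonormal ℂ (s.restrict v) := by
    rw [orthonormal_iff_ite]
    rintro ⟨i, hi⟩ ⟨j, hj⟩
    have hi' : (i : ℕ) < m := hi
    have hj' : (j : ℕ) < m := hj
    show ⟪v i, v j⟫_ℂ = _
    simp only [Set.restrict_apply, hvdef, dif_pos hi', dif_pos hj']
    rw [hw0w0]
    by_cases hij : i = j
    · subst hij; simp
    · rw [if_neg (by simpa [Fin.ext_iff] using fun h => hij (Fin.ext h)),
        if_neg (by simpa [Subtype.ext_iff] using hij)]
  obtain ⟨b, hb⟩ := hres.exists_orthonormalBasis_extension_of_card_eq hcard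
  have hbv : ∀ (ν : Fin (d * (m + 1))) (h : (ν : ℕ) < m), b ν = w0 ⟨ν, h⟩ := by
    intro ν h
    rw [hb ν h]
    simp [hvdef, dif_pos h]
  refine ⟨⇑b, ⟨ha.1 0, b.orthonormal, ?_, ?_⟩, ?_⟩
  · intro ν h ψ
    rw [hbv ν h, hinner_w0]
  · intro ν hν ψ
    rw [← hsum ψ, sum_inner]
    refine Finset.sum_eq_zero fun μ _ => ?_
    have hlt : (μ : ℕ) < d * (m + 1) := lt_of_lt_of_le μ.2 (le_trans hν (le_of_lt ν.2))
    set μ' : Fin (d * (m + 1)) := ⟨(μ : ℕ), hlt⟩ with hμ'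
    have : w0 μ = b μ' := by
      rw [hbv μ' (show ((μ' : Fin (d * (m+1))) : ℕ) < m from μ.2)]
    rw [this, inner_smul_left]
    have hne : μ' ≠ ν := by
      intro hEq
      have : (μ : ℕ) = (ν : ℕ) := by rw [← hEq]
      omega
    rw [b.orthonormal.2 hne, mul_zero]
  · intro ν h
    exact ⟨ξ ⟨ν, h⟩, hξ0 _, by rw [hbv ν h]⟩
end

section
/- Let {k_μ}_{μ=1}^m be a rank-1 POVM on ℂ^d that admits a product Naimark extension. Then for every μ ∈ {1, …, m}, the operator inequality |k_μ⟩⟨k_μ| + ∑_{ν : ⟨k_μ, k_ν⟩ = 0} |k_ν⟩⟨k_ν| ≥ ‖k_μ‖²·I holds, i.e. the Hermitian operator |k_μ⟩⟨k_μ| + ∑_{ν : ⟨k_μ, k_ν⟩ = 0} |k_ν⟩⟨k_ν| − ‖k_μ‖²·I on ℂ^d is positive semidefinite. -/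
open scoped InnerProductSpace

/-- The family `{k_μ}_{μ ∈ ι}` is a rank-1 POVM on `ℂ^d`: `∑_μ |k_μ⟩⟨k_μ| = I`. -/
def IsPOVM {d : ℕ} {ι : Type*} [Fintype ι] (k : ι → EuclideanSpace ℂ (Fin d)) : Prop :=
  ∑ μ, rankOne (k μ) = LinearMap.id

/-- The rank-1 POVM `{k_μ}_{μ ∈ ι}` on `ℂ^d` admits a *product Naimark extension*
(equivalently, has zero entanglement cost): for some ancilla dimension `e` and unit
vector `a₀ ∈ ℂ^e`, there is an orthonormal basis of `ℂ^d ⊗ ℂ^e` (indexed by `ι` plus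
`t` further indices, `card ι + t = d·e`) whose `ι`-members `w_μ` satisfy
`|⟨ψ ⊗ a₀, w_μ⟩|² = |⟨ψ, k_μ⟩|²` and are product vectors, the remaining members being
orthogonal to every `ψ ⊗ a₀`. -/
def HasProductNaimark {d : ℕ} {ι : Type*} [Fintype ι]
    (k : ι → EuclideanSpace ℂ (Fin d)) : Prop :=
  ∃ (e t : ℕ) (a₀ : EuclideanSpace ℂ (Fin e))
    (w : ι ⊕ Fin t → EuclideanSpace ℂ (Fin d × Fin e)),
    ‖a₀‖ = 1 ∧ Fintype.card ι + t = d * e ∧ Orthonormal ℂ w ∧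
    (∀ (μ : ι) (ψ : EuclideanSpace ℂ (Fin d)),
      ‖⟪tp ψ a₀, w (Sum.inl μ)⟫_ℂ‖ ^ 2 = ‖⟪ψ, k μ⟫_ℂ‖ ^ 2) ∧
    (∀ (ν : Fin t) (ψ : EuclideanSpace ℂ (Fin d)), ⟪tp ψ a₀, w (Sum.inr ν)⟫_ℂ = 0) ∧
    (∀ μ : ι, ∃ (x : EuclideanSpace ℂ (Fin d)) (y : EuclideanSpace ℂ (Fin e)),
      w (Sum.inl μ) = tp x y)

set_option maxHeartbeats 1000000
lemma rankOne_apply {d : ℕ} (kv x : EuclideanSpace ℂ (Fin d)) :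
    rankOne kv x = ⟪kv, x⟫_ℂ • kv := rfl

lemma inner_tp {d e : ℕ} (ψ x : EuclideanSpace ℂ (Fin d)) (a y : EuclideanSpace ℂ (Fin e)) :
    ⟪tp ψ a, tp x y⟫_ℂ = ⟪ψ, x⟫_ℂ * ⟪a, y⟫_ℂ := by
  simp only [PiLp.inner_apply, RCLike.inner_apply, tp]
  rw [Finset.sum_mul_sum, ← Finset.sum_product']
  rw [show ((Finset.univ : Finset (Fin d)) ×ˢ (Finset.univ : Finset (Fin e))) = Finset.univ from rfl]
  refine Finset.sum_congr rfl fun p _ => ?_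
  simp [map_mul]; ring

lemma norm_tp {d e : ℕ} (x : EuclideanSpace ℂ (Fin d)) (y : EuclideanSpace ℂ (Fin e)) :
    ‖tp x y‖ = ‖x‖ * ‖y‖ := by
  have h := inner_tp x x y y
  have h3 : ‖tp x y‖ ^ 2 = (‖x‖ * ‖y‖) ^ 2 := by
    rw [@norm_sq_eq_re_inner ℂ, h, inner_self_eq_norm_sq_to_K, inner_self_eq_norm_sq_to_K]
    simp [← Complex.ofReal_pow, mul_pow]
  nlinarith [norm_nonneg (tp x y), mul_nonneg (norm_nonneg x) (norm_nonneg y)]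

lemma re_inner_rankOne {d : ℕ} (kv x : EuclideanSpace ℂ (Fin d)) :
    (⟪x, rankOne kv x⟫_ℂ).re = ‖⟪x, kv⟫_ℂ‖ ^ 2 := by
  rw [rankOne_apply, inner_smul_right, ← inner_conj_symm kv x, mul_comm, Complex.mul_conj,
    Complex.normSq_eq_norm_sq, Complex.ofReal_re]

lemma inner_rankOne {d : ℕ} (kv x : EuclideanSpace ℂ (Fin d)) :
    ⟪rankOne kv x, x⟫_ℂ = (‖⟪x, kv⟫_ℂ‖ : ℂ) ^ 2 := by
  rw [rankOne_apply, inner_smul_left, ← inner_conj_symm kv x, mul_comm, Complex.mul_conj,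
    Complex.normSq_conj, Complex.normSq_eq_norm_sq, Complex.ofReal_pow]

lemma rankOne_eq {d : ℕ} {K kv : EuclideanSpace ℂ (Fin d)}
    (h : ∀ ψ, ‖⟪ψ, K⟫_ℂ‖ = ‖⟪ψ, kv⟫_ℂ‖) :
    rankOne K = rankOne kv := by
  rw [← ext_inner_map]
  intro x
  rw [inner_rankOne, inner_rankOne, h x]


/-- If the rank-1 POVM `{k_μ}_{μ=1}^m` on `ℂ^d` admits a product
Naimark extension (zero entanglement cost), then for every `μ` the Hermitian operator
`|k_μ⟩⟨k_μ| + ∑_{ν : ⟨k_μ,k_ν⟩=0} |k_ν⟩⟨k_ν| − ‖k_μ‖²·I` is positive semidefinite,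
i.e. its quadratic form is nonnegative. -/
theorem zero_cost_operator_inequality {d m : ℕ}
    (k : Fin m → EuclideanSpace ℂ (Fin d)) (hk : IsPOVM k)
    (hprod : HasProductNaimark k) :
    ∀ (μ : Fin m) (x : EuclideanSpace ℂ (Fin d)),
      ‖k μ‖ ^ 2 * ‖x‖ ^ 2 ≤
        (⟪x, (rankOne (k μ) +
          ∑ ν ∈ Finset.univ.filter (fun ν => ⟪k μ, k ν⟫_ℂ = 0), rankOne (k ν)) x⟫_ℂ).re := by
  intro μ x
  obtain ⟨e, t, a₀, w, ha₀, hcard, hon, habs, hperp, hprodv⟩ := hprod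
  choose xv yv hw using hprodv
  have hRHS : (⟪x, (rankOne (k μ) +
      ∑ ν ∈ Finset.univ.filter (fun ν => ⟪k μ, k ν⟫_ℂ = 0), rankOne (k ν)) x⟫_ℂ).re
      = ‖⟪x, k μ⟫_ℂ‖ ^ 2 +
        ∑ ν ∈ Finset.univ.filter (fun ν => ⟪k μ, k ν⟫_ℂ = 0), ‖⟪x, k ν⟫_ℂ‖ ^ 2 := by
    rw [LinearMap.add_apply, LinearMap.sum_apply, inner_add_right, inner_sum, Complex.add_re,
      Complex.re_sum, re_inner_rankOne]
    congr 1
    exact Finset.sum_congr rfl fun ν _ => re_inner_rankOne _ _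
  rw [hRHS]
  by_cases hkμ : k μ = 0
  · simp only [hkμ, norm_zero]
    have : (0:ℝ) ≤ ‖⟪x, (0 : EuclideanSpace ℂ (Fin d))⟫_ℂ‖ ^ 2 +
        ∑ ν ∈ Finset.univ.filter (fun ν => ⟪(0 : EuclideanSpace ℂ (Fin d)), k ν⟫_ℂ = 0),
          ‖⟪x, k ν⟫_ℂ‖ ^ 2 := by positivity
    simpa using this
  by_cases hx : x = 0
  · have h0 : (0:ℝ) ≤ ‖⟪x, k μ⟫_ℂ‖ ^ 2 +
        ∑ ν ∈ Finset.univ.filter (fun ν => ⟪k μ, k ν⟫_ℂ = 0),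
          ‖⟪x, k ν⟫_ℂ‖ ^ 2 := by positivity
    simpa [hx] using h0
  -- main case
  set S : Finset (Fin m) := insert μ (Finset.univ.filter (fun ν => ⟪k μ, k ν⟫_ℂ = 0)) with hS
  have hμnot : μ ∉ Finset.univ.filter (fun ν => ⟪k μ, k ν⟫_ℂ = 0) := by
    simp only [Finset.mem_filter, Finset.mem_univ, true_and]
    rw [inner_self_eq_zero]
    exact hkμ
  -- step: abs of slice inner products
  have hK : ∀ (ν : Fin m) (ψ : EuclideanSpace ℂ (Fin d)),
      ‖⟪ψ, xv ν⟫_ℂ * ⟪a₀, yv ν⟫_ℂ‖ = ‖⟪ψ, k ν⟫_ℂ‖ := by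
    intro ν ψ
    have h := habs ν ψ
    rw [hw ν, inner_tp] at h
    rw [← Real.sqrt_sq (norm_nonneg _), h, Real.sqrt_sq (norm_nonneg _)]
  -- proportionality
  have hprop : ∀ ν : Fin m, k ν ≠ 0 → ∃ c : ℂ, c ≠ 0 ∧ k ν = c • xv ν := by
    intro ν hν
    have hr : rankOne (⟪a₀, yv ν⟫_ℂ • xv ν) = rankOne (k ν) := by
      apply rankOne_eq
      intro ψ
      rw [inner_smul_right, ← hK ν ψ]
      rw [norm_mul, norm_mul]
      ring
    have happ := congrArg (fun T => T (k ν)) hr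
    simp only [rankOne_apply] at happ
    have hinner : ⟪k ν, k ν⟫_ℂ ≠ 0 := by rwa [inner_self_ne_zero]
    have hkeq : k ν = ((⟪k ν, k ν⟫_ℂ)⁻¹ * ⟪⟪a₀, yv ν⟫_ℂ • xv ν, k ν⟫_ℂ * ⟪a₀, yv ν⟫_ℂ) • xv ν := by
      calc k ν = (⟪k ν, k ν⟫_ℂ)⁻¹ • (⟪k ν, k ν⟫_ℂ • k ν) := by
            rw [smul_smul, inv_mul_cancel₀ hinner, one_smul]
        _ = (⟪k ν, k ν⟫_ℂ)⁻¹ • (⟪⟪a₀, yv ν⟫_ℂ • xv ν, k ν⟫_ℂ • ⟪a₀, yv ν⟫_ℂ • xv ν) := by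
            rw [happ]
        _ = ((⟪k ν, k ν⟫_ℂ)⁻¹ * ⟪⟪a₀, yv ν⟫_ℂ • xv ν, k ν⟫_ℂ * ⟪a₀, yv ν⟫_ℂ) • xv ν := by
            rw [smul_smul, smul_smul, mul_assoc]
    refine ⟨_, ?_, hkeq⟩
    intro hc0
    rw [hc0, zero_smul] at hkeq
    exact hν hkeq
  -- orthogonality of ancilla parts
  have hyorth : ∀ ν : Fin m, ν ≠ μ → ⟪k μ, k ν⟫_ℂ ≠ 0 → ⟪yv ν, yv μ⟫_ℂ = 0 := by
    intro ν hne hinner0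
    have hkν : k ν ≠ 0 := by
      intro h; exact hinner0 (by rw [h, inner_zero_right])
    obtain ⟨cμ, hcμ, hkμe⟩ := hprop μ hkμ
    obtain ⟨cν, hcν, hkνe⟩ := hprop ν hkν
    have hx0 : ⟪xv μ, xv ν⟫_ℂ ≠ 0 := by
      intro h0
      apply hinner0
      rw [hkμe, hkνe, inner_smul_left, inner_smul_right, h0]
      ring
    have horth : ⟪w (Sum.inl ν), w (Sum.inl μ)⟫_ℂ = 0 :=
      hon.2 (by simp [hne])
    rw [hw ν, hw μ, inner_tp] at horth
    have hx0' : ⟪xv ν, xv μ⟫_ℂ ≠ 0 := by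
      rw [← inner_conj_symm (xv ν) (xv μ)]
      intro h
      apply hx0
      have := congrArg (starRingEnd ℂ) h
      simp only [Complex.conj_conj, map_zero] at this
      exact this
    exact (mul_eq_zero.mp horth).resolve_left hx0'
  -- norms of the product pieces
  have hnw : ‖xv μ‖ * ‖yv μ‖ = 1 := by
    have := hon.1 (Sum.inl μ)
    rwa [hw μ, norm_tp] at this
  have hxvpos : 0 < ‖xv μ‖ := by
    rcases lt_or_eq_of_le (norm_nonneg (xv μ)) with h | h
    · exact h
    · exfalso; rw [← h, zero_mul] at hnw; exact zero_ne_one hnw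
  have hyvpos : 0 < ‖yv μ‖ := by
    rcases lt_or_eq_of_le (norm_nonneg (yv μ)) with h | h
    · exact h
    · exfalso; rw [← h, mul_zero] at hnw; exact zero_ne_one hnw
  -- the key norm relation
  have hkμpos : 0 < ‖k μ‖ := norm_pos_iff.mpr hkμ
  have hA : ‖⟪a₀, yv μ⟫_ℂ‖ = ‖k μ‖ * ‖yv μ‖ := by
    have h1 : ‖⟪k μ, k μ⟫_ℂ‖ = ‖k μ‖ ^ 2 := by
      rw [inner_self_eq_norm_sq_to_K]
      simp [← Complex.ofReal_pow]
    have h2 : ‖⟪k μ, xv μ⟫_ℂ‖ * ‖⟪a₀, yv μ⟫_ℂ‖ = ‖k μ‖ ^ 2 := by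
      rw [← norm_mul, hK μ (k μ), h1]
    have h3 : ‖⟪k μ, xv μ⟫_ℂ‖ ≤ ‖k μ‖ * ‖xv μ‖ := by
      simpa using norm_inner_le_norm (𝕜 := ℂ) (k μ) (xv μ)
    -- also, with ψ := K μ := ⟪a₀, yv μ⟫ • xv μ:
    set Kμ : EuclideanSpace ℂ (Fin d) := ⟪a₀, yv μ⟫_ℂ • xv μ with hKμdef
    have h4 : ‖⟪Kμ, xv μ⟫_ℂ‖ * ‖⟪a₀, yv μ⟫_ℂ‖ = ‖⟪Kμ, k μ⟫_ℂ‖ := by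
      rw [← norm_mul, hK μ Kμ]
    have h5 : ⟪Kμ, Kμ⟫_ℂ = ⟪Kμ, xv μ⟫_ℂ * ⟪a₀, yv μ⟫_ℂ := by
      rw [hKμdef, inner_smul_right]
      ring
    have h6 : ‖⟪Kμ, Kμ⟫_ℂ‖ = ‖Kμ‖ ^ 2 := by
      rw [inner_self_eq_norm_sq_to_K]
      simp [← Complex.ofReal_pow]
    have h7 : ‖Kμ‖ ^ 2 = ‖⟪Kμ, k μ⟫_ℂ‖ := by
      rw [← h6, h5, norm_mul, h4]
    have h8 : ‖⟪Kμ, k μ⟫_ℂ‖ ≤ ‖Kμ‖ * ‖k μ‖ := by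
      simpa using norm_inner_le_norm (𝕜 := ℂ) Kμ (k μ)
    have h9 : ‖⟪k μ, Kμ⟫_ℂ‖ = ‖k μ‖ ^ 2 := by
      have : ⟪k μ, Kμ⟫_ℂ = ⟪k μ, xv μ⟫_ℂ * ⟪a₀, yv μ⟫_ℂ := by
        rw [hKμdef, inner_smul_right]; ring
      rw [this, norm_mul, h2]
    have h10 : ‖⟪k μ, Kμ⟫_ℂ‖ ≤ ‖k μ‖ * ‖Kμ‖ := by
      simpa using norm_inner_le_norm (𝕜 := ℂ) (k μ) Kμ
    have hKnorm : ‖Kμ‖ = ‖k μ‖ := by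
      have hle : ‖k μ‖ ≤ ‖Kμ‖ := by nlinarith
      have hge : ‖Kμ‖ ≤ ‖k μ‖ := by nlinarith [norm_nonneg Kμ]
      linarith
    have hKn2 : ‖Kμ‖ = ‖⟪a₀, yv μ⟫_ℂ‖ * ‖xv μ‖ := by
      rw [hKμdef, norm_smul]
    have hN : ‖⟪a₀, yv μ⟫_ℂ‖ * ‖xv μ‖ = ‖k μ‖ := by rw [← hKn2, hKnorm]
    linear_combination ‖yv μ‖ * hN - ‖⟪a₀, yv μ⟫_ℂ‖ * hnw
  -- build the orthonormal basis
  have hcard' : Fintype.card (Fin m ⊕ Fin t) =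
      Module.finrank ℂ (EuclideanSpace ℂ (Fin d × Fin e)) := by
    simp only [Fintype.card_sum, Fintype.card_fin, finrank_euclideanSpace, Fintype.card_prod]
    simpa using hcard
  have hne : Nonempty (Fin m ⊕ Fin t) := ⟨Sum.inl μ⟩
  have hspan : ⊤ ≤ Submodule.span ℂ (Set.range w) := by
    rw [← coe_basisOfLinearIndependentOfCardEqFinrank hon.linearIndependent hcard']
    exact (basisOfLinearIndependentOfCardEqFinrank hon.linearIndependent hcard').span_eq.ge
  let ob : OrthonormalBasis (Fin m ⊕ Fin t) ℂ (EuclideanSpace ℂ (Fin d × Fin e)) :=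
    OrthonormalBasis.mk hon hspan
  have hob : ⇑ob = w := OrthonormalBasis.coe_mk hon hspan
  have hpars := ob.sum_inner_mul_inner (tp x a₀) (tp x (yv μ))
  rw [hob] at hpars
  rw [Fintype.sum_sum_type] at hpars
  have hinrzero : ∑ ν : Fin t, ⟪tp x a₀, w (Sum.inr ν)⟫_ℂ * ⟪w (Sum.inr ν), tp x (yv μ)⟫_ℂ = 0 := by
    apply Finset.sum_eq_zero
    intro ν _
    rw [hperp ν x, zero_mul]
  rw [hinrzero, add_zero] at hpars
  have hmain : ⟪tp x a₀, tp x (yv μ)⟫_ℂ =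
      ∑ ν ∈ S, ⟪tp x a₀, w (Sum.inl ν)⟫_ℂ * ⟪w (Sum.inl ν), tp x (yv μ)⟫_ℂ := by
    rw [← hpars]
    symm
    apply Finset.sum_subset (Finset.subset_univ S)
    intro ν _ hν
    have hν1 : ν ≠ μ := by
      intro h; exact hν (by rw [hS, h]; exact Finset.mem_insert_self μ _)
    have hν2 : ⟪k μ, k ν⟫_ℂ ≠ 0 := by
      intro h
      exact hν (by
        rw [hS]
        exact Finset.mem_insert_of_mem (Finset.mem_filter.mpr ⟨Finset.mem_univ ν, h⟩))
    rw [hw ν, inner_tp, inner_tp, hyorth ν hν1 hν2, mul_zero, mul_zero]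
  -- triangle inequality
  have h0 : ‖⟪tp x a₀, tp x (yv μ)⟫_ℂ‖ = ‖x‖ ^ 2 * ‖⟪a₀, yv μ⟫_ℂ‖ := by
    rw [inner_tp, norm_mul, inner_self_eq_norm_sq_to_K]
    simp [← Complex.ofReal_pow]
  have htri : ‖x‖ ^ 2 * ‖⟪a₀, yv μ⟫_ℂ‖ ≤
      ∑ ν ∈ S, ‖⟪tp x a₀, w (Sum.inl ν)⟫_ℂ‖ *
        ‖⟪w (Sum.inl ν), tp x (yv μ)⟫_ℂ‖ := by
    rw [← h0, hmain]
    refine (norm_sum_le _ _).trans_eq ?_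
    exact Finset.sum_congr rfl fun ν _ => norm_mul _ _
  have hCS := Finset.sum_mul_sq_le_sq_mul_sq S
    (fun ν => ‖⟪tp x a₀, w (Sum.inl ν)⟫_ℂ‖)
    (fun ν => ‖⟪w (Sum.inl ν), tp x (yv μ)⟫_ℂ‖)
  have hbessel : ∑ ν ∈ S, ‖⟪w (Sum.inl ν), tp x (yv μ)⟫_ℂ‖ ^ 2 ≤ (‖x‖ * ‖yv μ‖) ^ 2 := by
    have hb := (hon.comp Sum.inl Sum.inl_injective).sum_inner_products_le
      (x := tp x (yv μ)) (s := S)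
    rw [norm_tp] at hb
    simpa [Function.comp] using hb
  have hsumΦ : ∑ ν ∈ S, ‖⟪tp x a₀, w (Sum.inl ν)⟫_ℂ‖ ^ 2 =
      ∑ ν ∈ S, ‖⟪x, k ν⟫_ℂ‖ ^ 2 :=
    Finset.sum_congr rfl fun ν _ => habs ν x
  have hRnonneg : (0:ℝ) ≤ ∑ ν ∈ S, ‖⟪x, k ν⟫_ℂ‖ ^ 2 :=
    Finset.sum_nonneg fun ν _ => sq_nonneg _
  have hxpos : 0 < ‖x‖ := norm_pos_iff.mpr hx
  have hgoal : ‖k μ‖ ^ 2 * ‖x‖ ^ 2 ≤ ∑ ν ∈ S, ‖⟪x, k ν⟫_ℂ‖ ^ 2 := by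
    rw [hsumΦ] at hCS
    have hlhs_nonneg : (0:ℝ) ≤ ‖x‖ ^ 2 * ‖⟪a₀, yv μ⟫_ℂ‖ :=
      mul_nonneg (sq_nonneg _) (norm_nonneg _)
    have hsq : (‖x‖ ^ 2 * ‖⟪a₀, yv μ⟫_ℂ‖) ^ 2 ≤
        (∑ ν ∈ S, ‖⟪x, k ν⟫_ℂ‖ ^ 2) * (‖x‖ * ‖yv μ‖) ^ 2 := by
      calc (‖x‖ ^ 2 * ‖⟪a₀, yv μ⟫_ℂ‖) ^ 2
          ≤ (∑ ν ∈ S, ‖⟪tp x a₀, w (Sum.inl ν)⟫_ℂ‖ *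
              ‖⟪w (Sum.inl ν), tp x (yv μ)⟫_ℂ‖) ^ 2 := by
            apply pow_le_pow_left₀ hlhs_nonneg htri
        _ ≤ _ := hCS.trans (by
            apply mul_le_mul_of_nonneg_left hbessel hRnonneg)
    rw [hA] at hsq
    have hfac : (‖x‖ ^ 2 * (‖k μ‖ * ‖yv μ‖)) ^ 2 =
        (‖k μ‖ ^ 2 * ‖x‖ ^ 2) * (‖x‖ ^ 2 * ‖yv μ‖ ^ 2) := by ring
    have hfac2 : (‖x‖ * ‖yv μ‖) ^ 2 = ‖x‖ ^ 2 * ‖yv μ‖ ^ 2 := by ring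
    rw [hfac, hfac2] at hsq
    have hpos : 0 < ‖x‖ ^ 2 * ‖yv μ‖ ^ 2 := mul_pos (pow_pos hxpos 2) (pow_pos hyvpos 2)
    exact le_of_mul_le_mul_right (by linarith [hsq]) hpos
  calc ‖k μ‖ ^ 2 * ‖x‖ ^ 2 ≤ ∑ ν ∈ S, ‖⟪x, k ν⟫_ℂ‖ ^ 2 := hgoal
    _ = ‖⟪x, k μ⟫_ℂ‖ ^ 2 +
        ∑ ν ∈ Finset.univ.filter (fun ν => ⟪k μ, k ν⟫_ℂ = 0), ‖⟪x, k ν⟫_ℂ‖ ^ 2 := by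
      rw [hS, Finset.sum_insert hμnot]
end
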